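/- arXiv:0712.2908 — 3 statements merged into one kernel-verified Lean document; each statement's English description precedes it below -/
import Mathlib

section
/- Let G be a finite 2-connected series-parallel graph and let (u, v) be a pair of ends for G. Then G is {u, v}-exit 2-copwin. -/
open SimpleGraph

variable {V : Type*}



/-- A move in the game: pass or slide along an edge. -/
def Step (G : SimpleGraph V) (a b : V) : Prop := a = b ∨ G.Adj a b

/-- A (full-information, positional) strategy for `k` cops. -/
structure CopStrategy (G : SimpleGraph V) (k : ℕ) where
  init : Fin k → V
  move : (Fin k → V) → V → (Fin k → V)
  valid : ∀ c r i, Step G (c i) (move c r i)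

/-- A (full-information, positional) strategy for the robber. -/
structure RobberStrategy (G : SimpleGraph V) (k : ℕ) where
  init : (Fin k → V) → V
  move : (Fin k → V) → V → V
  valid : ∀ c r, Step G r (move c r)

/-- State of the game after round `n`: cop positions and robber position.
Cops move first in each round. -/
def play {G : SimpleGraph V} {k : ℕ} (σ : CopStrategy G k) (τ : RobberStrategy G k) :
    ℕ → (Fin k → V) × V
  | 0 => (σ.init, τ.init σ.init)
  | n + 1 =>
    let p := play σ τ n
    let c' := σ.move p.1 p.2
    (c', τ.move c' p.2)

/-- At time `n`, a cop occupies the robber's vertex (either the robber stands on a cop,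
or the cops' move at round `n+1` lands on him). -/
def Caught {G : SimpleGraph V} {k : ℕ} (σ : CopStrategy G k) (τ : RobberStrategy G k)
    (n : ℕ) : Prop :=
  ∃ i, (play σ τ n).1 i = (play σ τ n).2 ∨ (play σ τ (n + 1)).1 i = (play σ τ n).2

/-- `G` is `k`-copwin: `k` cops have a winning strategy. -/
def CopWin (G : SimpleGraph V) (k : ℕ) : Prop :=
  ∃ σ : CopStrategy G k, ∀ τ : RobberStrategy G k, ∃ n, Caught σ τ n

/-- After the cops' move of round `m+1`, the robber stands alone on an exit vertex. -/
def Escaped {G : SimpleGraph V} {k : ℕ} (X : Set V) (σ : CopStrategy G k)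
    (τ : RobberStrategy G k) (m : ℕ) : Prop :=
  (play σ τ m).2 ∈ X ∧ ∀ i, (play σ τ (m + 1)).1 i ≠ (play σ τ m).2

/-- `G` is `X`-exit `k`-copwin: however the robber places the cops (subject to all exits
being occupied) and himself, the cops can catch the robber before he ever stands alone
on an exit vertex after a cops' move. -/
def ExitCopWin (G : SimpleGraph V) (k : ℕ) (X : Set V) : Prop :=
  ∀ c₀ : Fin k → V, X ⊆ Set.range c₀ →
    ∃ σ : CopStrategy G k, σ.init = c₀ ∧
      ∀ τ : RobberStrategy G k, ∃ n, Caught σ τ n ∧ ∀ m ≤ n, ¬ Escaped X σ τ m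



/-- `G` has a `K₄` minor: four nonempty, pairwise disjoint, connected branch sets,
pairwise joined by an edge. -/
def HasK4Minor (G : SimpleGraph V) : Prop :=
  ∃ B : Fin 4 → Set V,
    (∀ i, (B i).Nonempty) ∧
    (∀ i, (G.induce (B i)).Connected) ∧
    (∀ i j, i ≠ j → Disjoint (B i) (B j)) ∧
    (∀ i j, i ≠ j → ∃ a ∈ B i, ∃ b ∈ B j, G.Adj a b)

/-- A multigraph on a finite set of natural-number vertices, with a multiset of edges. -/
structure Multigraph where
  verts : Finset ℕ
  edges : Multiset (Sym2 ℕ)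

/-- The underlying simple graph of a multigraph (on the ambient type `ℕ`). -/
def Multigraph.toSimple (M : Multigraph) : SimpleGraph ℕ where
  Adj a b := a ≠ b ∧ s(a, b) ∈ M.edges
  symm := ⟨fun a b h => ⟨h.1.symm, by rw [Sym2.eq_swap]; exact h.2⟩⟩
  loopless := ⟨fun a h => h.1 rfl⟩

/-- The simple graph on the vertex set of `M` on which the game is played. -/
def Multigraph.game (M : Multigraph) : SimpleGraph (↑M.verts : Set ℕ) :=
  M.toSimple.induce ↑M.verts

/-- Path-like series-parallel multigraphs with pair of ends `u`, `v`: obtained from the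
single edge `uv` by repeatedly duplicating an edge or subdividing an edge. -/
inductive PathLike : Multigraph → ℕ → ℕ → Prop where
  | base (u v : ℕ) (huv : u ≠ v) : PathLike ⟨{u, v}, {s(u, v)}⟩ u v
  | dup {M : Multigraph} {u v : ℕ} (e : Sym2 ℕ) (he : e ∈ M.edges)
      (h : PathLike M u v) : PathLike ⟨M.verts, e ::ₘ M.edges⟩ u v
  | subdiv {M : Multigraph} {u v : ℕ} (x y : ℕ) (he : s(x, y) ∈ M.edges)
      (w : ℕ) (hw : w ∉ M.verts) (h : PathLike M u v) :
      PathLike ⟨insert w M.verts, s(x, w) ::ₘ s(w, y) ::ₘ M.edges.erase s(x, y)⟩ u v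



/-- `v` is a cut-vertex of the connected graph `G`: deleting it disconnects `G`. -/
def CutVertex (G : SimpleGraph V) (v : V) : Prop :=
  G.Connected ∧ ¬ ((⊤ : G.Subgraph).deleteVerts {v}).coe.Connected

/-- A set of vertices inducing a connected subgraph without a cut-vertex of its own
(for sets of at most two vertices only connectivity is required). -/
def IsBiconnSet (G : SimpleGraph V) (B : Set V) : Prop :=
  (G.induce B).Connected ∧ ∀ v ∈ B, B.ncard ≤ 2 ∨ (G.induce (B \ {v})).Connected

/-- A block of `G`: a maximal set of at least two vertices inducing a subgraph that is
2-connected or a bridge. -/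
def IsBlock (G : SimpleGraph V) (B : Set V) : Prop :=
  2 ≤ B.ncard ∧ IsBiconnSet G B ∧
    ∀ B' : Set V, B ⊆ B' → 2 ≤ B'.ncard → IsBiconnSet G B' → B' = B

/-- The interior of a block: its vertices that are not cut-vertices of `G`. -/
def BlockInterior (G : SimpleGraph V) (B : Set V) : Set V :=
  {v ∈ B | ¬ CutVertex G v}

/-- `G` is 2-connected (in the weak sense, including a single edge): it is connected
and has no cut-vertex. -/
def TwoConnected (G : SimpleGraph V) : Prop :=
  G.Connected ∧ ∀ v : V, ((⊤ : G.Subgraph).deleteVerts {v}).coe.Connected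

/-- `c'` is one step from `c` toward `y` along a shortest path (passing if `c = y`). -/
def StepToward (G : SimpleGraph V) (y c c' : V) : Prop :=
  (c' = c ∧ c = y) ∨ (G.Adj c c' ∧ G.dist y c' + 1 = G.dist y c)

/-!
Path-like graphs are exactly the two-terminal series-parallel graphs: single edges, and two such
graphs glued at both ends (parallel) or at one end (series). We induct on this decomposition,
with the cops standing on the two ends.

The winning positions of the cops form an attractor; on a finite graph its levels give a positional
strategy, so it suffices to show that every robber position is in the attractor.

In a parallel gluing the robber is confined to one side, whose exits are the guarded ends. In a
series gluing at `w` of `A ∋ a` and `B ∋ b`, each cop walks a geodesic rail from its end towards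
`w`, aiming one step behind the robber's distance from that end, so the robber can never reach
an end uncaught. Once both cops have caught up with their targets, the robber is on `w` or strictly
inside one part, say `A`, and then the `B`-cop is next to `w`: it seals `w` while the `A`-cop
retreats to `a`, and from there the cops play the strategy for `A` given by induction.
-/

namespace Step

variable {G G' : SimpleGraph V} {a b : V}

@[refl]
theorem refl (G : SimpleGraph V) (a : V) : Step G a a := Or.inl rfl

theorem symm : Step G a b → Step G b a := Or.imp Eq.symm Adj.symm

theorem mono (hG : G ≤ G') : Step G a b → Step G' a b := Or.imp_right (@hG a b)

theorem dist_le_add_one {c : V} (h : Step G a b) :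
    G.dist c b ≤ G.dist c a + 1 ∧ G.dist c a ≤ G.dist c b + 1 := by
  rcases h with rfl | h
  · omega
  · rcases h.diff_dist_adj (u := c) with h | h | h <;> omega

end Step

namespace SimpleGraph

variable {G : SimpleGraph V}

/-- Every walk from `a` to `r` leaves `A` through `w`. -/
theorem Reachable.dist_lt_of_boundary {A : Set V} {a r w : V} (hreach : G.Reachable a r)
    (hA : ∀ x y, G.Adj x y → x ∈ A → y ∉ A → x = w) (ha : a ∈ A) (hr : r ∉ A) :
    G.dist a w < G.dist a r := by
  classical
  obtain ⟨p, hp⟩ := hreach.exists_walk_length_eq_dist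
  obtain ⟨d, hd, hdA, hdA'⟩ := p.exists_boundary_dart A ha hr
  have hw : d.fst = w := hA _ _ d.adj hdA hdA'
  have hws : w ∈ p.support := hw ▸ p.dart_fst_mem_support_of_mem_darts hd
  have hwr : w ≠ r := by rintro rfl; exact hr (hw ▸ hdA)
  have hlen := congrArg Walk.length (p.take_spec hws)
  rw [Walk.length_append] at hlen
  have hdrop : (p.dropUntil w hws).length ≠ 0 := fun h => hwr (Walk.eq_of_length_eq_zero h)
  have := dist_le (p.takeUntil w hws)
  omega

namespace Walk

variable {x y : V} (p : G.Walk x y)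

theorem step_getVert_succ (s : ℕ) : Step G (p.getVert s) (p.getVert (s + 1)) := by
  by_cases hs : s < p.length
  · exact Or.inr (p.adj_getVert_succ hs)
  · rw [p.getVert_of_length_le (by omega), p.getVert_of_length_le (by omega)]

theorem step_getVert {s t : ℕ} (hst : s ≤ t + 1) (hts : t ≤ s + 1) :
    Step G (p.getVert s) (p.getVert t) := by
  obtain rfl | rfl | rfl : t = s ∨ t = s + 1 ∨ s = t + 1 := by omega
  · rfl
  · exact p.step_getVert_succ s
  · exact (p.step_getVert_succ t).symm

theorem step_getVert_start {s : ℕ} (hs : s ≤ 1) : Step G (p.getVert s) x := by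
  simpa using p.step_getVert (t := 0) (by omega) (by omega)

theorem step_getVert_end {s : ℕ} (h₁ : s ≤ p.length + 1) (h₂ : p.length ≤ s + 1) :
    Step G (p.getVert s) y := by
  simpa using p.step_getVert h₁ h₂

end Walk

end SimpleGraph

theorem fin_two_eq_or_eq_swap {α : Type*} {c : Fin 2 → α} {x y : α} (hxy : x ≠ y)
    (hx : x ∈ Set.range c) (hy : y ∈ Set.range c) : c = ![x, y] ∨ c = ![y, x] := by
  obtain ⟨i, rfl⟩ := hx
  obtain ⟨j, rfl⟩ := hy
  fin_cases i <;> fin_cases j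
  · exact absurd rfl hxy
  · left; ext k; fin_cases k <;> rfl
  · right; ext k; fin_cases k <;> rfl
  · exact absurd rfl hxy

section Attractor

variable {k : ℕ} {G : SimpleGraph V} {X : Set V}

/-- The positions, cops to move, from which the cops can force a capture before the robber
stands alone on an exit in `X`: the attractor of the capture positions. -/
inductive CopsWin (G : SimpleGraph V) (X : Set V) : (Fin k → V) → V → Prop
  | capture {c r} (i : Fin k) : Step G (c i) r → CopsWin G X c r
  | move {c r} (c' : Fin k → V) : r ∉ X → (∀ i, Step G (c i) (c' i)) →
      (∀ r', Step G r r' → CopsWin G X c' r') → CopsWin G X c r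

inductive CopsWinWithin (G : SimpleGraph V) (X : Set V) : ℕ → (Fin k → V) → V → Prop
  | capture {n c r} (i : Fin k) : Step G (c i) r → CopsWinWithin G X n c r
  | move {n c r} (c' : Fin k → V) : r ∉ X → (∀ i, Step G (c i) (c' i)) →
      (∀ r', Step G r r' → CopsWinWithin G X n c' r') → CopsWinWithin G X (n + 1) c r

theorem CopsWinWithin.mono {n : ℕ} {c : Fin k → V} {r : V} (h : CopsWinWithin G X n c r) :
    ∀ {m}, n ≤ m → CopsWinWithin G X m c r := by
  induction h with
  | capture i hi => exact fun _ => .capture i hi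
  | move c' hr hc _ ih =>
    intro m hm
    obtain ⟨m, rfl⟩ := Nat.exists_eq_add_of_lt hm
    exact .move c' hr hc fun r' hr' => ih r' hr' (by omega)

theorem CopsWin.exists_copsWinWithin [Finite V] {c : Fin k → V} {r : V} (h : CopsWin G X c r) :
    ∃ n, CopsWinWithin G X n c r := by
  induction h with
  | capture i hi => exact ⟨0, .capture i hi⟩
  | @move c r c' hr hc _ ih =>
    have ih' : ∀ r', ∃ n, Step G r r' → CopsWinWithin G X n c' r' := fun r' => by
      by_cases h : Step G r r'
      · exact (ih r' h).imp fun _ hn _ => hn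
      · exact ⟨0, fun h' => absurd h' h⟩
    choose N hN using ih'
    obtain ⟨B, hB⟩ := Finite.bddAbove_range N
    exact ⟨B + 1, .move c' hr hc fun r' hr' => (hN r' hr').mono (hB ⟨r', rfl⟩)⟩

/-- A positional cop strategy that captures when it can and otherwise descends one level of the
attractor. -/
theorem CopsWinWithin.exists_move : ∃ μ : (Fin k → V) → V → Fin k → V,
    (∀ c r i, Step G (c i) (μ c r i)) ∧ (∀ c r i, Step G (c i) r → ∃ j, μ c r j = r) ∧
    ∀ n c r, CopsWinWithin G X (n + 1) c r → (∀ i, ¬ Step G (c i) r) →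
      ∀ r', Step G r r' → CopsWinWithin G X n (μ c r) r' := by
  classical
  suffices ∀ c r, ∃ c' : Fin k → V, (∀ i, Step G (c i) (c' i)) ∧
      (∀ i, Step G (c i) r → ∃ j, c' j = r) ∧ ∀ n, CopsWinWithin G X (n + 1) c r →
        (∀ i, ¬ Step G (c i) r) → ∀ r', Step G r r' → CopsWinWithin G X n c' r' by
    choose μ hμ using this
    exact ⟨μ, fun c r => (hμ c r).1, fun c r => (hμ c r).2.1, fun n c r => (hμ c r).2.2 n⟩
  intro c r
  by_cases hcap : ∃ i, Step G (c i) r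
  · obtain ⟨i, hi⟩ := hcap
    refine ⟨Function.update c i r, fun j => ?_, fun _ _ => ⟨i, by simp⟩,
      fun _ _ hn => absurd hi (hn i)⟩
    rcases eq_or_ne j i with rfl | hj
    · simpa using hi
    · simpa [hj] using Step.refl G (c j)
  simp only [not_exists] at hcap
  by_cases hwin : ∃ n, CopsWinWithin G X n c r
  · obtain ⟨N, hN, hmin⟩ : ∃ N, CopsWinWithin G X N c r ∧ ∀ n, CopsWinWithin G X n c r → N ≤ n :=
      ⟨Nat.find hwin, Nat.find_spec hwin, fun n => Nat.find_min' hwin⟩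
    cases hN with
    | capture i hi => exact absurd hi (hcap i)
    | @move N _ _ c' _ hc hnext =>
      exact ⟨c', hc, fun i hi => absurd hi (hcap i),
        fun n hn _ r' hr' => (hnext r' hr').mono (by have := hmin _ hn; omega)⟩
  · exact ⟨c, fun _ => .refl G _, fun i hi => absurd hi (hcap i),
      fun n hn => absurd ⟨n + 1, hn⟩ hwin⟩

theorem CopStrategy.caught_of_copsWinWithin (σ : CopStrategy G k)
    (hcap : ∀ c r i, Step G (c i) r → ∃ j, σ.move c r j = r)
    (hwin : ∀ n c r, CopsWinWithin G X (n + 1) c r → (∀ i, ¬ Step G (c i) r) →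
      ∀ r', Step G r r' → CopsWinWithin G X n (σ.move c r) r')
    (τ : RobberStrategy G k) (n m : ℕ)
    (h : CopsWinWithin G X n (play σ τ m).1 (play σ τ m).2) :
    ∃ N, m ≤ N ∧ Caught σ τ N ∧ ∀ j, m ≤ j → j ≤ N → ¬ Escaped X σ τ j := by
  have hcapture : ∀ m, (∃ i, Step G ((play σ τ m).1 i) (play σ τ m).2) →
      ∃ N, m ≤ N ∧ Caught σ τ N ∧ ∀ j, m ≤ j → j ≤ N → ¬ Escaped X σ τ j := by
    rintro m ⟨i, hi⟩
    obtain ⟨j, hj⟩ := hcap _ _ i hi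
    refine ⟨m, le_rfl, ⟨j, Or.inr hj⟩, fun l hml hlm hesc => ?_⟩
    obtain rfl : l = m := le_antisymm hlm hml
    exact hesc.2 j hj
  induction n generalizing m with
  | zero => cases h with
    | capture i hi => exact hcapture m ⟨i, hi⟩
  | succ n ih =>
    by_cases hc : ∃ i, Step G ((play σ τ m).1 i) (play σ τ m).2
    · exact hcapture m hc
    simp only [not_exists] at hc
    have hrX : (play σ τ m).2 ∉ X := by
      cases h with
      | capture i hi => exact absurd hi (hc i)
      | move _ hr _ _ => exact hr
    obtain ⟨N, hmN, hN, hesc⟩ := ih (m + 1) (hwin n _ _ h hc _ (τ.valid _ _))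
    refine ⟨N, by omega, hN, fun j hmj hjN => ?_⟩
    rcases hmj.eq_or_lt with rfl | hlt
    · exact fun hesc' => hrX hesc'.1
    · exact hesc j hlt hjN

theorem exists_copStrategy_of_copsWinWithin {c₀ : Fin k → V}
    (h : ∀ r, ∃ n, CopsWinWithin G X n c₀ r) :
    ∃ σ : CopStrategy G k, σ.init = c₀ ∧
      ∀ τ : RobberStrategy G k, ∃ n, Caught σ τ n ∧ ∀ m ≤ n, ¬ Escaped X σ τ m := by
  obtain ⟨μ, hvalid, hcap, hwin⟩ := CopsWinWithin.exists_move (G := G) (X := X)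
  refine ⟨⟨c₀, μ, hvalid⟩, rfl, fun τ => ?_⟩
  obtain ⟨n, hn⟩ := h (τ.init c₀)
  obtain ⟨N, -, hN, hesc⟩ := CopStrategy.caught_of_copsWinWithin ⟨c₀, μ, hvalid⟩ hcap hwin τ n 0 hn
  exact ⟨N, hN, fun m hm => hesc m m.zero_le hm⟩

end Attractor

namespace CopsWin

variable {k : ℕ} {G : SimpleGraph V} {X : Set V}

theorem comp_perm {c : Fin k → V} {r : V} (h : CopsWin G X c r) (e : Equiv.Perm (Fin k)) :
    CopsWin G X (c ∘ e) r := by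
  induction h with
  | capture i hi => exact .capture (e.symm i) (by simpa using hi)
  | move c' hr hc _ ih => exact .move (c' ∘ e) hr (fun i => hc (e i)) ih

section TwoCops

variable {x y x' y' r : V}

theorem capture₂ (h : Step G x r ∨ Step G y r) : CopsWin G X ![x, y] r := by
  rcases h with h | h
  exacts [.capture 0 h, .capture 1 h]

theorem move₂ (hr : r ∉ X) (hx : Step G x x') (hy : Step G y y')
    (h : ∀ r', Step G r r' → CopsWin G X ![x', y'] r') : CopsWin G X ![x, y] r :=
  .move ![x', y'] hr (Fin.forall_fin_two.2 ⟨hx, hy⟩) h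

theorem swap (h : CopsWin G X ![x, y] r) : CopsWin G X ![y, x] r := by
  convert h.comp_perm (Equiv.swap 0 1) using 1
  ext i
  fin_cases i <;> rfl

end TwoCops

theorem lift {G₁ : SimpleGraph V} {X₁ S : Set V} (hG : G₁ ≤ G) (hX : ∀ x ∈ S, x ∈ X → x ∈ X₁)
    (hS : ∀ x ∈ S, x ∉ X₁ → ∀ y, G.Adj x y → G₁.Adj x y ∧ y ∈ S) {c : Fin k → V} {r : V}
    (h : CopsWin G₁ X₁ c r) (hr : r ∈ S) : CopsWin G X c r := by
  induction h with
  | capture i hi => exact .capture i (hi.mono hG)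
  | @move c r c' hrX hc _ ih =>
    refine .move c' (fun h => hrX (hX r hr h)) (fun i => (hc i).mono hG) fun r' hr' => ?_
    rcases hr' with rfl | hadj
    · exact ih r (.refl _ _) hr
    · obtain ⟨hadj₁, hr'⟩ := hS r hr hrX r' hadj
      exact ih r' (Or.inr hadj₁) hr'

theorem induce {S : Set V} (hS : ∀ x ∈ S, ∀ y, G.Adj x y → y ∈ S) {c : Fin k → V} {r : V}
    (h : CopsWin G X c r) (hc : ∀ i, c i ∈ S) (hr : r ∈ S) :
    CopsWin (G.induce S) (Subtype.val ⁻¹' X) (fun i => ⟨c i, hc i⟩) ⟨r, hr⟩ := by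
  induction h with
  | capture i hi => exact .capture i (hi.imp (fun h => Subtype.ext h) id)
  | @move c r c' hrX hstep _ ih =>
    have hc' : ∀ i, c' i ∈ S := fun i => by
      rcases hstep i with h | h
      exacts [h ▸ hc i, hS _ (hc i) _ h]
    exact .move (fun i => ⟨c' i, hc' i⟩) hrX (fun i => (hstep i).imp Subtype.ext id)
      fun r' hr' => ih r' (hr'.imp (congrArg Subtype.val) id) hc' r'.2

end CopsWin

/-- The rail index a cop aims at: one behind a robber at distance `D` from the start of a rail
of length `L` (and `0` when the robber is on the start, by truncated subtraction). -/
def chaseTarget (L D : ℕ) : ℕ := min L (D - 1)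

/-- Vanishes once the cop at rail index `s` is within one of its target `f`; before that the cop
advances every round, and `f ≤ L` bounds how long the target can keep running ahead. -/
def chasePotential (L s f : ℕ) : ℕ := if f ≤ s + 1 then 0 else L + 1 - s

theorem chaseTarget_zero (L : ℕ) : chaseTarget L 0 = 0 := by
  simp [chaseTarget]

theorem chaseTarget_le (L D : ℕ) : chaseTarget L D ≤ L := min_le_left _ _

theorem chaseTarget_le_add_one {L D D' : ℕ} (h : D' ≤ D + 1) :
    chaseTarget L D' ≤ chaseTarget L D + 1 := by
  unfold chaseTarget; omega

theorem chasePotential_chase_le {L s f f' : ℕ} (hf : f' ≤ f + 1) :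
    chasePotential L (min (s + 1) f) f' ≤ chasePotential L s f := by
  unfold chasePotential; split_ifs <;> omega

theorem chasePotential_chase_lt {L s f f' : ℕ} (hfL : f ≤ L) (hf : f' ≤ f + 1)
    (hs : s + 2 ≤ f) : chasePotential L (min (s + 1) f) f' < chasePotential L s f := by
  unfold chasePotential; split_ifs <;> omega

structure SeriesSplit (G : SimpleGraph V) (A B : Set V) (a w b : V) : Prop where
  inter : ∀ x ∈ A, x ∈ B → x = w
  left_mem : a ∈ A
  right_mem : b ∈ B
  left_ne : a ≠ w
  right_ne : b ≠ w
  adj : ∀ x y, G.Adj x y → x ∈ A ∧ y ∈ A ∨ x ∈ B ∧ y ∈ B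
  reachable : ∀ x ∈ A ∪ B, G.Reachable w x

namespace SeriesSplit

variable {G : SimpleGraph V} {A B X : Set V} {a w b r r' : V}

theorem symm (hS : SeriesSplit G A B a w b) : SeriesSplit G B A b w a where
  inter x hB hA := hS.inter x hA hB
  left_mem := hS.right_mem
  right_mem := hS.left_mem
  left_ne := hS.right_ne
  right_ne := hS.left_ne
  adj x y h := (hS.adj x y h).symm
  reachable x hx := hS.reachable x (Set.union_comm B A ▸ hx)

theorem right_notMem_left (hS : SeriesSplit G A B a w b) : b ∉ A :=
  fun hb => hS.right_ne (hS.inter b hb hS.right_mem)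

theorem mem_left_of_step (hS : SeriesSplit G A B a w b) (hr : r ∈ A) (hrw : r ≠ w)
    (h : Step G r r') : r' ∈ A := by
  rcases h with rfl | h
  · exact hr
  · rcases hS.adj r r' h with h | h
    exacts [h.2, absurd (hS.inter r hr h.1) hrw]

theorem mem_union_of_step (hS : SeriesSplit G A B a w b) (hr : r ∈ A ∪ B) (h : Step G r r') :
    r' ∈ A ∪ B := by
  rcases h with rfl | h
  · exact hr
  · rcases hS.adj r r' h with h | h
    exacts [Or.inl h.2, Or.inr h.2]

theorem dist_lt (hS : SeriesSplit G A B a w b) (hr : r ∈ B) (hrw : r ≠ w) :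
    G.dist a w < G.dist a r := by
  have hreach := (hS.reachable a (Or.inl hS.left_mem)).symm.trans (hS.reachable r (Or.inr hr))
  refine hreach.dist_lt_of_boundary (fun x y h hx hy => ?_) hS.left_mem
    fun hA => hrw (hS.inter r hA hr)
  exact (hS.adj x y h).elim (fun h => absurd h.2 hy) fun h => hS.inter x hx h.1

theorem copsWin_guard_step (hS : SeriesSplit G A B a w b) (hX : X ⊆ {a, b}) (pa : G.Walk a w)
    {s : ℕ} {y : V}
    (hnext : ∀ r' ∈ A, s - 1 ≤ G.dist a r' + 1 → CopsWin G X ![pa.getVert (s - 1), w] r')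
    (hy : Step G y w) (hr : r ∈ A) (hs : s ≤ G.dist a r + 1) :
    CopsWin G X ![pa.getVert s, y] r := by
  by_cases hcap : Step G (pa.getVert s) r ∨ Step G y r
  · exact .capture₂ hcap
  rw [not_or] at hcap
  have hrw : r ≠ w := by rintro rfl; exact hcap.2 hy
  have hra : r ≠ a := by
    rintro rfl
    rw [SimpleGraph.dist_self] at hs
    exact hcap.1 (pa.step_getVert_start hs)
  have hrb : r ≠ b := fun h => hS.right_notMem_left (h ▸ hr)
  refine .move₂ (fun h => (hX h).elim hra hrb)
    (pa.step_getVert (t := s - 1) (by omega) (by omega)) hy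
    fun r' hr' => hnext r' (hS.mem_left_of_step hr hrw hr') ?_
  have := (hr'.dist_le_add_one (c := a)).2
  omega

/-- The `B`-cop seals `w` while the `A`-cop walks back to `a`, never more than one step farther
from `a` than the robber; from there the cops play their strategy for `A`. -/
theorem copsWin_guard (hS : SeriesSplit G A B a w b) (hX : X ⊆ {a, b})
    (hA : ∀ r ∈ A, CopsWin G X ![a, w] r) (pa : G.Walk a w) (s : ℕ) {y : V} (hy : Step G y w)
    (hr : r ∈ A) (hs : s ≤ G.dist a r + 1) : CopsWin G X ![pa.getVert s, y] r := by
  have home : ∀ s, ∀ r ∈ A, s ≤ G.dist a r + 1 → CopsWin G X ![pa.getVert s, w] r := by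
    intro s
    induction s with
    | zero => exact fun r hr _ => by rw [Walk.getVert_zero]; exact hA r hr
    | succ s ih => exact fun r hr hs => hS.copsWin_guard_step hX pa ih (.refl G w) hr hs
  exact hS.copsWin_guard_step hX pa (home (s - 1)) hy hr hs

/-- If the robber is strictly inside one part, the other cop is next to `w`; if he is on `w`, both
cops close in on `w` and he must step into a part with a cop next to `w`. -/
theorem copsWin_synced (hS : SeriesSplit G A B a w b) (hX : X ⊆ {a, b})
    (hA : ∀ r ∈ A, CopsWin G X ![a, w] r) (hB : ∀ r ∈ B, CopsWin G X ![b, w] r)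
    (pa : G.Walk a w) (hpa : pa.length = G.dist a w) (pb : G.Walk b w)
    (hpb : pb.length = G.dist b w) {sA sB : ℕ} (hr : r ∈ A ∪ B)
    (hsA : sA ≤ chaseTarget pa.length (G.dist a r) + 1)
    (hfA : chaseTarget pa.length (G.dist a r) ≤ sA + 1)
    (hsB : sB ≤ chaseTarget pb.length (G.dist b r) + 1)
    (hfB : chaseTarget pb.length (G.dist b r) ≤ sB + 1) :
    CopsWin G X ![pa.getVert sA, pb.getVert sB] r := by
  have hX' : X ⊆ {b, a} := Set.pair_comm a b ▸ hX
  unfold chaseTarget at hsA hfA hsB hfB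
  by_cases hrw : r = w
  · subst r
    have hya : Step G (pa.getVert (pa.length - 1)) w := pa.step_getVert_end (by omega) (by omega)
    have hyb : Step G (pb.getVert (pb.length - 1)) w := pb.step_getVert_end (by omega) (by omega)
    refine .move₂ (x' := pa.getVert (pa.length - 1)) (y' := pb.getVert (pb.length - 1))
      (fun h => (hX h).elim (hS.left_ne ·.symm) (hS.right_ne ·.symm))
      (pa.step_getVert (by omega) (by omega)) (pb.step_getVert (by omega) (by omega))
      fun r' hr' => ?_
    have hda := (hr'.dist_le_add_one (c := a)).2
    have hdb := (hr'.dist_le_add_one (c := b)).2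
    rcases hS.mem_union_of_step hr hr' with hr'A | hr'B
    · exact hS.copsWin_guard hX hA pa _ hyb hr'A (by omega)
    · exact (hS.symm.copsWin_guard hX' hB pb _ hya hr'B (by omega)).swap
  rcases hr with hrA | hrB
  · have := hS.symm.dist_lt hrA hrw
    exact hS.copsWin_guard hX hA pa sA (pb.step_getVert_end (by omega) (by omega)) hrA (by omega)
  · have := hS.dist_lt hrB hrw
    exact (hS.symm.copsWin_guard hX' hB pb sB (pa.step_getVert_end (by omega) (by omega)) hrB
      (by omega)).swap

/-- Each cop moves one step towards its target, which keeps it at most one step ahead of the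
target and lowers the total potential until both cops are within one of their targets. -/
theorem copsWin_chase (hS : SeriesSplit G A B a w b) (hX : X ⊆ {a, b})
    (hA : ∀ r ∈ A, CopsWin G X ![a, w] r) (hB : ∀ r ∈ B, CopsWin G X ![b, w] r)
    (pa : G.Walk a w) (hpa : pa.length = G.dist a w) (pb : G.Walk b w)
    (hpb : pb.length = G.dist b w) (μ : ℕ) :
    ∀ sA sB r, r ∈ A ∪ B → sA ≤ chaseTarget pa.length (G.dist a r) + 1 →
      sB ≤ chaseTarget pb.length (G.dist b r) + 1 →
      chasePotential pa.length sA (chaseTarget pa.length (G.dist a r)) +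
        chasePotential pb.length sB (chaseTarget pb.length (G.dist b r)) = μ →
      CopsWin G X ![pa.getVert sA, pb.getVert sB] r := by
  induction μ using Nat.strong_induction_on with
  | _ μ ih =>
  intro sA sB r hr hsA hsB hμ
  by_cases hsync : chaseTarget pa.length (G.dist a r) ≤ sA + 1 ∧
      chaseTarget pb.length (G.dist b r) ≤ sB + 1
  · exact hS.copsWin_synced hX hA hB pa hpa pb hpb hr hsA hsync.1 hsB hsync.2
  by_cases hcap : Step G (pa.getVert sA) r ∨ Step G (pb.getVert sB) r
  · exact .capture₂ hcap
  rw [not_or] at hcap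
  have hra : r ≠ a := by
    rintro rfl
    rw [SimpleGraph.dist_self, chaseTarget_zero] at hsA
    exact hcap.1 (pa.step_getVert_start hsA)
  have hrb : r ≠ b := by
    rintro rfl
    rw [SimpleGraph.dist_self, chaseTarget_zero] at hsB
    exact hcap.2 (pb.step_getVert_start hsB)
  refine .move₂ (x' := pa.getVert (min (sA + 1) (chaseTarget pa.length (G.dist a r))))
    (y' := pb.getVert (min (sB + 1) (chaseTarget pb.length (G.dist b r))))
    (fun h => (hX h).elim hra hrb) (pa.step_getVert (by omega) (by omega))
    (pb.step_getVert (by omega) (by omega)) fun r' hr' => ?_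
  have hfA := chaseTarget_le_add_one (L := pa.length) (hr'.dist_le_add_one (c := a)).1
  have hfA' := chaseTarget_le_add_one (L := pa.length) (hr'.dist_le_add_one (c := a)).2
  have hfB := chaseTarget_le_add_one (L := pb.length) (hr'.dist_le_add_one (c := b)).1
  have hfB' := chaseTarget_le_add_one (L := pb.length) (hr'.dist_le_add_one (c := b)).2
  refine ih _ ?_ _ _ r' (hS.mem_union_of_step hr hr') (by omega) (by omega) rfl
  have hleA := chasePotential_chase_le (L := pa.length) (s := sA) hfA
  have hleB := chasePotential_chase_le (L := pb.length) (s := sB) hfB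
  rcases not_and_or.1 hsync with h | h
  · have := chasePotential_chase_lt (s := sA) (chaseTarget_le _ _) hfA (by omega)
    omega
  · have := chasePotential_chase_lt (s := sB) (chaseTarget_le _ _) hfB (by omega)
    omega

theorem copsWin (hS : SeriesSplit G A B a w b) (hX : X ⊆ {a, b})
    (hA : ∀ r ∈ A, CopsWin G X ![a, w] r) (hB : ∀ r ∈ B, CopsWin G X ![b, w] r) (hr : r ∈ A ∪ B) :
    CopsWin G X ![a, b] r := by
  obtain ⟨pa, hpa⟩ := (hS.reachable a (Or.inl hS.left_mem)).symm.exists_walk_length_eq_dist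
  obtain ⟨pb, hpb⟩ := (hS.reachable b (Or.inr hS.right_mem)).symm.exists_walk_length_eq_dist
  simpa using hS.copsWin_chase hX hA hB pa hpa pb hpb _ 0 0 r hr (by omega) (by omega) rfl

end SeriesSplit

namespace Multigraph

def edge (u v : ℕ) : Multigraph := ⟨{u, v}, {s(u, v)}⟩

def dup (M : Multigraph) (e : Sym2 ℕ) : Multigraph := ⟨M.verts, e ::ₘ M.edges⟩

def subdivide (M : Multigraph) (x y w : ℕ) : Multigraph :=
  ⟨insert w M.verts, s(x, w) ::ₘ s(w, y) ::ₘ M.edges.erase s(x, y)⟩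

structure IsGluing (M M₁ M₂ : Multigraph) (S : Finset ℕ) : Prop where
  verts : M.verts = M₁.verts ∪ M₂.verts
  inter : M₁.verts ∩ M₂.verts = S
  edges : M.edges = M₁.edges + M₂.edges

inductive SeriesParallel : Multigraph → ℕ → ℕ → Prop
  | edge {u v : ℕ} : u ≠ v → SeriesParallel (edge u v) u v
  | parallel {M M₁ M₂ : Multigraph} {u v : ℕ} : M.IsGluing M₁ M₂ {u, v} →
      SeriesParallel M₁ u v → SeriesParallel M₂ u v → SeriesParallel M u v
  | series {M M₁ M₂ : Multigraph} {u w v : ℕ} : M.IsGluing M₁ M₂ {w} →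
      SeriesParallel M₁ u w → SeriesParallel M₂ w v → SeriesParallel M u v

namespace IsGluing

variable {M M₁ M₂ : Multigraph} {S : Finset ℕ}

theorem symm (h : M.IsGluing M₁ M₂ S) : M.IsGluing M₂ M₁ S :=
  ⟨h.verts.trans (Finset.union_comm _ _), (Finset.inter_comm _ _).trans h.inter,
    h.edges.trans (add_comm _ _)⟩

theorem dup_left (h : M.IsGluing M₁ M₂ S) (e : Sym2 ℕ) :
    (M.dup e).IsGluing (M₁.dup e) M₂ S :=
  ⟨h.verts, h.inter, by simp [dup, h.edges]⟩

theorem subdivide_left (h : M.IsGluing M₁ M₂ S) {x y w : ℕ} (hxy : s(x, y) ∈ M₁.edges)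
    (hw : w ∉ M₂.verts) : (M.subdivide x y w).IsGluing (M₁.subdivide x y w) M₂ S :=
  ⟨by simp [subdivide, h.verts, Finset.insert_union],
    by simp [subdivide, Finset.insert_inter_of_notMem hw, h.inter],
    by simp [subdivide, h.edges, Multiset.erase_add_left_pos _ hxy]⟩

theorem mem_edges (h : M.IsGluing M₁ M₂ S) {e : Sym2 ℕ} (he : e ∈ M.edges) :
    e ∈ M₁.edges ∨ e ∈ M₂.edges :=
  Multiset.mem_add.1 (h.edges ▸ he)

theorem mem_union (h : M.IsGluing M₁ M₂ S) {x : ℕ} (hx : x ∈ M.verts) :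
    x ∈ M₁.verts ∨ x ∈ M₂.verts :=
  Finset.mem_union.1 (h.verts ▸ hx)

theorem notMem_left (h : M.IsGluing M₁ M₂ S) {w : ℕ} (hw : w ∉ M.verts) : w ∉ M₁.verts :=
  fun hw₁ => hw (h.verts ▸ Finset.mem_union_left _ hw₁)

theorem mem_of_mem_of_mem (h : M.IsGluing M₁ M₂ S) {x : ℕ} (hx₁ : x ∈ M₁.verts)
    (hx₂ : x ∈ M₂.verts) : x ∈ S :=
  h.inter ▸ Finset.mem_inter.2 ⟨hx₁, hx₂⟩

theorem adj_iff (h : M.IsGluing M₁ M₂ S) {x y : ℕ} :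
    M.toSimple.Adj x y ↔ M₁.toSimple.Adj x y ∨ M₂.toSimple.Adj x y := by
  simp only [toSimple, h.edges, Multiset.mem_add, and_or_left]

theorem toSimple_le_left (h : M.IsGluing M₁ M₂ S) : M₁.toSimple ≤ M.toSimple :=
  fun _ _ hxy => h.adj_iff.2 (Or.inl hxy)

theorem copsWin_of_left (h : M.IsGluing M₁ M₂ S) {X₁ X : Set ℕ} {k : ℕ} {c : Fin k → ℕ}
    {r : ℕ} (hM₁ : ∀ x y, M₁.toSimple.Adj x y → x ∈ M₁.verts)
    (hM₂ : ∀ x y, M₂.toSimple.Adj x y → x ∈ M₂.verts) (hS : ↑S ⊆ X₁)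
    (hX : ∀ x ∈ M₁.verts, x ∈ X → x ∈ X₁) (hwin : CopsWin M₁.toSimple X₁ c r)
    (hr : r ∈ M₁.verts) : CopsWin M.toSimple X c r := by
  refine hwin.lift (S := ↑M₁.verts) h.toSimple_le_left hX (fun x hx hxX y hxy => ?_) hr
  rcases h.adj_iff.1 hxy with hxy | hxy
  · exact ⟨hxy, hM₁ y x hxy.symm⟩
  · exact absurd (hS (h.mem_of_mem_of_mem hx (hM₂ x y hxy))) hxX

end IsGluing

namespace SeriesParallel

variable {M : Multigraph} {u v : ℕ}

theorem dup (h : M.SeriesParallel u v) {e : Sym2 ℕ} (he : e ∈ M.edges) :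
    (M.dup e).SeriesParallel u v := by
  induction h with
  | @edge u v huv =>
    obtain rfl : e = s(u, v) := Multiset.mem_singleton.1 he
    exact .parallel (M₁ := Multigraph.edge u v) (M₂ := Multigraph.edge u v)
      ⟨(Finset.union_self _).symm, Finset.inter_self _, rfl⟩ (.edge huv) (.edge huv)
  | parallel hg _ _ ih₁ ih₂ =>
    rcases hg.mem_edges he with he | he
    · exact .parallel (hg.dup_left e) (ih₁ he) ‹_›
    · exact .parallel (hg.symm.dup_left e).symm ‹_› (ih₂ he)
  | series hg _ _ ih₁ ih₂ =>
    rcases hg.mem_edges he with he | he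
    · exact .series (hg.dup_left e) (ih₁ he) ‹_›
    · exact .series (hg.symm.dup_left e).symm ‹_› (ih₂ he)

theorem subdivide_edge {u v x y w : ℕ} (huv : u ≠ v) (hxy : s(x, y) = s(u, v)) (hwu : w ≠ u)
    (hwv : w ≠ v) : ((Multigraph.edge u v).subdivide x y w).SeriesParallel u v := by
  refine .series (M₁ := Multigraph.edge u w) (M₂ := Multigraph.edge w v) ⟨?_, ?_, ?_⟩
    (.edge hwu.symm) (.edge hwv)
  · ext a
    simp only [Multigraph.subdivide, Multigraph.edge, Finset.mem_insert, Finset.mem_union,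
      Finset.mem_singleton]
    tauto
  · ext a
    simp only [Multigraph.edge, Finset.mem_inter, Finset.mem_insert, Finset.mem_singleton]
    constructor
    · rintro ⟨h₁ | h₁, h₂ | h₂⟩ <;> simp_all
    · rintro rfl
      simp
  · simp only [Multigraph.subdivide, Multigraph.edge, hxy, Multiset.erase_singleton]
    rcases Sym2.eq_iff.1 hxy with ⟨rfl, rfl⟩ | ⟨rfl, rfl⟩
    · rfl
    · rw [Sym2.eq_swap (a := y), Sym2.eq_swap (b := x), Multiset.cons_swap]
      rfl

theorem subdivide (h : M.SeriesParallel u v) {x y w : ℕ} (hxy : s(x, y) ∈ M.edges)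
    (hw : w ∉ M.verts) : (M.subdivide x y w).SeriesParallel u v := by
  induction h with
  | edge huv =>
    simp only [Multigraph.edge, Finset.mem_insert, Finset.mem_singleton, not_or] at hw
    exact subdivide_edge huv (Multiset.mem_singleton.1 hxy) hw.1 hw.2
  | parallel hg _ _ ih₁ ih₂ =>
    rcases hg.mem_edges hxy with hxy | hxy
    · exact .parallel (hg.subdivide_left hxy (hg.symm.notMem_left hw))
        (ih₁ hxy (hg.notMem_left hw)) ‹_›
    · exact .parallel (hg.symm.subdivide_left hxy (hg.notMem_left hw)).symm ‹_›
        (ih₂ hxy (hg.symm.notMem_left hw))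
  | series hg _ _ ih₁ ih₂ =>
    rcases hg.mem_edges hxy with hxy | hxy
    · exact .series (hg.subdivide_left hxy (hg.symm.notMem_left hw))
        (ih₁ hxy (hg.notMem_left hw)) ‹_›
    · exact .series (hg.symm.subdivide_left hxy (hg.notMem_left hw)).symm ‹_›
        (ih₂ hxy (hg.symm.notMem_left hw))

theorem left_mem (h : M.SeriesParallel u v) : u ∈ M.verts := by
  induction h with
  | edge => simp [Multigraph.edge]
  | parallel hg _ _ ih => exact hg.verts ▸ Finset.mem_union_left _ ih
  | series hg _ _ ih => exact hg.verts ▸ Finset.mem_union_left _ ih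

theorem right_mem (h : M.SeriesParallel u v) : v ∈ M.verts := by
  induction h with
  | edge => simp [Multigraph.edge]
  | parallel hg _ _ ih => exact hg.verts ▸ Finset.mem_union_left _ ih
  | series hg _ _ _ ih => exact hg.verts ▸ Finset.mem_union_right _ ih

theorem ne (h : M.SeriesParallel u v) : u ≠ v := by
  induction h with
  | edge huv => exact huv
  | parallel _ _ _ ih => exact ih
  | series hg h₁ h₂ ih =>
    rintro rfl
    exact ih (by simpa using hg.mem_of_mem_of_mem h₁.left_mem h₂.right_mem)

theorem mem_of_adj (h : M.SeriesParallel u v) {x y : ℕ} (hxy : M.toSimple.Adj x y) :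
    x ∈ M.verts := by
  induction h generalizing x y with
  | edge =>
    obtain ⟨-, he⟩ := hxy
    rcases Sym2.eq_iff.1 (Multiset.mem_singleton.1 he) with ⟨rfl, -⟩ | ⟨rfl, -⟩ <;>
      simp [Multigraph.edge]
  | parallel hg _ _ ih₁ ih₂ | series hg _ _ ih₁ ih₂ =>
    rw [hg.verts, Finset.mem_union]
    exact (hg.adj_iff.1 hxy).imp ih₁ ih₂

theorem reachable (h : M.SeriesParallel u v) {x : ℕ} (hx : x ∈ M.verts) :
    M.toSimple.Reachable u x := by
  induction h generalizing x with
  | @edge u v huv =>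
    simp only [Multigraph.edge, Finset.mem_insert, Finset.mem_singleton] at hx
    rcases hx with rfl | rfl
    · rfl
    · exact Adj.reachable ⟨huv, Multiset.mem_singleton_self _⟩
  | parallel hg _ _ ih₁ ih₂ =>
    rcases hg.mem_union hx with hx | hx
    · exact (ih₁ hx).mono hg.toSimple_le_left
    · exact (ih₂ hx).mono hg.symm.toSimple_le_left
  | series hg h₁ _ ih₁ ih₂ =>
    rcases hg.mem_union hx with hx | hx
    · exact (ih₁ hx).mono hg.toSimple_le_left
    · exact ((ih₁ h₁.right_mem).mono hg.toSimple_le_left).trans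
        ((ih₂ hx).mono hg.symm.toSimple_le_left)

end SeriesParallel

theorem IsGluing.seriesSplit {M M₁ M₂ : Multigraph} {u w v : ℕ} (hg : M.IsGluing M₁ M₂ {w})
    (h₁ : M₁.SeriesParallel u w) (h₂ : M₂.SeriesParallel w v) :
    SeriesSplit M.toSimple M₁.verts M₂.verts u w v where
  inter x hx₁ hx₂ := Finset.mem_singleton.1 (hg.mem_of_mem_of_mem hx₁ hx₂)
  left_mem := h₁.left_mem
  right_mem := h₂.right_mem
  left_ne := h₁.ne
  right_ne := h₂.ne.symm
  adj x y hxy := (hg.adj_iff.1 hxy).imp (fun h => ⟨h₁.mem_of_adj h, h₁.mem_of_adj h.symm⟩)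
    fun h => ⟨h₂.mem_of_adj h, h₂.mem_of_adj h.symm⟩
  reachable x hx := by
    rcases hx with hx | hx
    · exact ((h₁.reachable h₁.right_mem).symm.trans (h₁.reachable hx)).mono hg.toSimple_le_left
    · exact (h₂.reachable hx).mono hg.symm.toSimple_le_left

theorem SeriesParallel.copsWin {M : Multigraph} {u v : ℕ} (h : M.SeriesParallel u v) {r : ℕ}
    (hr : r ∈ M.verts) : CopsWin M.toSimple {u, v} ![u, v] r := by
  induction h generalizing r with
  | edge =>
    simp only [Multigraph.edge, Finset.mem_insert, Finset.mem_singleton] at hr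
    rcases hr with rfl | rfl
    exacts [.capture₂ (Or.inl (.refl _ _)), .capture₂ (Or.inr (.refl _ _))]
  | parallel hg h₁ h₂ ih₁ ih₂ =>
    rcases hg.mem_union hr with hr | hr
    · exact hg.copsWin_of_left (fun _ _ => h₁.mem_of_adj) (fun _ _ => h₂.mem_of_adj)
        (by simp) (fun _ _ => id) (ih₁ hr) hr
    · exact hg.symm.copsWin_of_left (fun _ _ => h₂.mem_of_adj) (fun _ _ => h₁.mem_of_adj)
        (by simp) (fun _ _ => id) (ih₂ hr) hr
  | series hg h₁ h₂ ih₁ ih₂ =>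
    have hS := hg.seriesSplit h₁ h₂
    refine hS.copsWin subset_rfl (fun r hr => ?_) (fun r hr => ?_) (hg.mem_union hr)
    · refine hg.copsWin_of_left (fun _ _ => h₁.mem_of_adj) (fun _ _ => h₂.mem_of_adj)
        (by simp) (fun x hx hxX => ?_) (ih₁ hr) hr
      rcases hxX with rfl | rfl
      exacts [Or.inl rfl, Or.inr (hS.inter x hx h₂.right_mem)]
    · refine hg.symm.copsWin_of_left (fun _ _ => h₂.mem_of_adj) (fun _ _ => h₁.mem_of_adj)
        (by simp) (fun x hx hxX => ?_) (ih₂ hr).swap hr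
      rcases hxX with rfl | rfl
      exacts [Or.inl (hS.inter x h₁.left_mem hx), Or.inr rfl]

theorem SeriesParallel.copsWin_game {M : Multigraph} {u v : ℕ} (h : M.SeriesParallel u v)
    (r : (↑M.verts : Set ℕ)) :
    CopsWin M.game {⟨u, h.left_mem⟩, ⟨v, h.right_mem⟩} ![⟨u, h.left_mem⟩, ⟨v, h.right_mem⟩] r := by
  have hX : ({⟨u, h.left_mem⟩, ⟨v, h.right_mem⟩} : Set (↑M.verts : Set ℕ)) =
      Subtype.val ⁻¹' {u, v} := by
    ext ⟨x, hx⟩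
    simp
  have huv : ∀ i, ![u, v] i ∈ (↑M.verts : Set ℕ) := Fin.forall_fin_two.2 ⟨h.left_mem, h.right_mem⟩
  have hc : (![⟨u, h.left_mem⟩, ⟨v, h.right_mem⟩] : Fin 2 → (↑M.verts : Set ℕ)) =
      fun i => ⟨![u, v] i, huv i⟩ := by
    ext i
    fin_cases i <;> rfl
  rw [hX, hc]
  exact (h.copsWin r.2).induce (fun _ _ _ hxy => h.mem_of_adj hxy.symm) huv r.2

end Multigraph

theorem PathLike.seriesParallel {M : Multigraph} {u v : ℕ} (h : PathLike M u v) :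
    M.SeriesParallel u v := by
  induction h with
  | base u v huv => exact .edge huv
  | dup e he _ ih => exact ih.dup he
  | subdiv x y he w hw _ ih => exact ih.subdivide he hw

theorem twoConnected_exit_two_copwin_general (M : Multigraph) (u v : ℕ)
    (hP : PathLike M u v)
    (hu : u ∈ (↑M.verts : Set ℕ)) (hv : v ∈ (↑M.verts : Set ℕ)) :
    ExitCopWin M.game 2 {⟨u, hu⟩, ⟨v, hv⟩} := by
  have hSP := hP.seriesParallel
  intro c₀ hc₀
  refine exists_copStrategy_of_copsWinWithin fun r => CopsWin.exists_copsWinWithin ?_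
  have huv : (⟨u, hu⟩ : (↑M.verts : Set ℕ)) ≠ ⟨v, hv⟩ := fun h => hSP.ne (congrArg Subtype.val h)
  rcases fin_two_eq_or_eq_swap huv (hc₀ (by simp)) (hc₀ (by simp)) with rfl | rfl
  exacts [hSP.copsWin_game r, (hSP.copsWin_game r).swap]

/-- A finite 2-connected series-parallel graph with a pair of ends `u`, `v` is
`{u, v}`-exit 2-copwin. -/
theorem twoConnected_exit_two_copwin (M : Multigraph) (u v : ℕ)
    (hP : PathLike M u v) (h2conn : TwoConnected M.game)
    (hu : u ∈ (↑M.verts : Set ℕ)) (hv : v ∈ (↑M.verts : Set ℕ)) :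
    ExitCopWin M.game 2 {⟨u, hu⟩, ⟨v, hv⟩} :=
  twoConnected_exit_two_copwin_general M u v hP hu hv
end

section
/- Let G be a finite path-like series-parallel graph with pair of ends (u, v) that is 2-connected (i.e., consists of a single block), and let H' be a connected component of G − {u, v}. Then the subgraph H of G induced by {u, v} ∪ V(H') is again a path-like series-parallel graph with pair of ends (u, v). -/
open SimpleGraph

variable {V : Type*}



/-- The sub-multigraph of `M` induced on a finite set `T` of vertices. -/
noncomputable def Multigraph.induce (M : Multigraph) (T : Finset ℕ) : Multigraph :=
  ⟨M.verts ∩ T,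
    @Multiset.filter (Sym2 ℕ) (fun e => ∀ x ∈ e, x ∈ T) (Classical.decPred _) M.edges⟩

/-!
Induct on the construction of `M`, keeping track of any vertex set `T ⊇ {u, v}` that contains
all neighbours of its vertices other than `u`, `v` and spans at least one edge. A duplication or
a subdivision of an edge inside `T` is replayed in `M[T]`. A subdivision vertex outside `T` is
invisible in `M[T]` unless the subdivided edge has both ends in `T`; closedness forces such an
edge to join `u` and `v`, so `M[T]` merely loses one of its `uv`-edges, which a path-like
graph with another edge can afford.
-/

theorem Multiset.filter_erase {α : Type*} [DecidableEq α] (p : α → Prop) [DecidablePred p]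
    (a : α) (s : Multiset α) : (s.erase a).filter p = (s.filter p).erase a := by
  by_cases ha : p a
  · simp [← Multiset.sub_singleton, Multiset.filter_singleton, ha]
  · rw [Multiset.erase_of_notMem fun h => ha (Multiset.of_mem_filter h)]
    simp [← Multiset.sub_singleton, Multiset.filter_singleton, ha]

namespace Multigraph

theorem induce_eq (M : Multigraph) (T : Finset ℕ) :
    M.induce T = ⟨M.verts ∩ T, M.edges.filter (· ∈ T.sym2)⟩ := by
  unfold induce
  congr 1
  exact @Multiset.filter_congr _ _ _ (Classical.decPred _) _ _ fun _ _ => Finset.mem_sym2_iff.symm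

def NeighborClosed (M : Multigraph) (u v : ℕ) (T : Finset ℕ) : Prop :=
  ∀ a ∈ T, a ≠ u → a ≠ v → ∀ b, M.toSimple.Adj a b → b ∈ T

theorem mem_induce_edges {M : Multigraph} {T : Finset ℕ} {e : Sym2 ℕ} :
    e ∈ (M.induce T).edges ↔ e ∈ M.edges ∧ e ∈ T.sym2 := by
  rw [induce_eq]
  exact Multiset.mem_filter

theorem induce_subdivide_of_mem (M : Multigraph) {T : Finset ℕ} {x y w : ℕ}
    (hx : x ∈ T) (hy : y ∈ T) (hw : w ∈ T) :
    (M.subdivide x y w).induce T = (M.induce T).subdivide x y w := by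
  simp only [induce_eq, subdivide, Finset.insert_inter_of_mem hw]
  rw [Multiset.filter_cons_of_pos _ (by simp [hx, hw]),
    Multiset.filter_cons_of_pos _ (by simp [hy, hw]), Multiset.filter_erase]

theorem induce_subdivide_of_notMem (M : Multigraph) {T : Finset ℕ} {x y w : ℕ} (hw : w ∉ T) :
    (M.subdivide x y w).induce T = ⟨(M.induce T).verts, (M.induce T).edges.erase s(x, y)⟩ := by
  simp only [induce_eq, subdivide, Finset.insert_inter_of_notMem hw]
  rw [Multiset.filter_cons_of_neg _ (by simp [hw]), Multiset.filter_cons_of_neg _ (by simp [hw]),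
    Multiset.filter_erase]

theorem subdivide_adj_of_adj {M : Multigraph} {x y w a b : ℕ} (hab : M.toSimple.Adj a b)
    (hxy : s(a, b) ≠ s(x, y)) : (M.subdivide x y w).toSimple.Adj a b :=
  ⟨hab.1, by simp [subdivide, Multiset.mem_erase_of_ne hxy, hab.2]⟩

theorem subdivide_adj_left {M : Multigraph} {x y w : ℕ} (hxw : x ≠ w) :
    (M.subdivide x y w).toSimple.Adj x w :=
  ⟨hxw, by simp [subdivide]⟩

theorem subdivide_adj_right {M : Multigraph} {x y w : ℕ} (hyw : y ≠ w) :
    (M.subdivide x y w).toSimple.Adj y w :=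
  ⟨hyw, by simp [subdivide, Sym2.eq_swap]⟩

end Multigraph

namespace PathLike

theorem ends_mem {M : Multigraph} {u v : ℕ} (h : PathLike M u v) :
    u ∈ M.verts ∧ v ∈ M.verts := by
  induction h with
  | base => simp
  | dup _ _ _ ih => exact ih
  | subdiv _ _ _ _ _ _ ih => exact ⟨Finset.mem_insert_of_mem ih.1, Finset.mem_insert_of_mem ih.2⟩

theorem mem_verts_of_mem_edge {M : Multigraph} {u v : ℕ} (h : PathLike M u v)
    {e : Sym2 ℕ} (he : e ∈ M.edges) {z : ℕ} (hz : z ∈ e) : z ∈ M.verts := by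
  induction h generalizing e z with
  | base => simp_all
  | dup f hf _ ih =>
    rcases Multiset.mem_cons.1 he with rfl | he
    exacts [ih hf hz, ih he hz]
  | subdiv x y hxy w _ _ ih =>
    have hx := ih hxy (Sym2.mem_mk_left x y)
    have hy := ih hxy (Sym2.mem_mk_right x y)
    simp only [Multiset.mem_cons] at he
    rcases he with rfl | rfl | he
    · rcases Sym2.mem_iff.1 hz with rfl | rfl <;> simp [hx]
    · rcases Sym2.mem_iff.1 hz with rfl | rfl <;> simp [hy]
    · exact Finset.mem_insert_of_mem (ih (Multiset.mem_of_mem_erase he) hz)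

theorem mem_verts_of_adj {M : Multigraph} {u v : ℕ} (h : PathLike M u v) {a b : ℕ}
    (hab : M.toSimple.Adj a b) : b ∈ M.verts :=
  h.mem_verts_of_mem_edge hab.2 (Sym2.mem_mk_right a b)

theorem exists_adj {M : Multigraph} {u v : ℕ} (h : PathLike M u v) {z : ℕ}
    (hz : z ∈ M.verts) : ∃ b, M.toSimple.Adj z b := by
  induction h generalizing z with
  | base u v huv =>
    simp only [Finset.mem_insert, Finset.mem_singleton] at hz
    rcases hz with rfl | rfl
    exacts [⟨v, huv, by simp⟩, ⟨u, huv.symm, by simp [Sym2.eq_swap]⟩]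
  | dup _ _ _ ih =>
    obtain ⟨b, hb⟩ := ih hz
    exact ⟨b, hb.1, Multiset.mem_cons_of_mem hb.2⟩
  | subdiv x y hxy w hw h ih =>
    have hxw : x ≠ w := fun hx => hw (hx ▸ h.mem_verts_of_mem_edge hxy (Sym2.mem_mk_left x y))
    have hyw : y ≠ w := fun hy => hw (hy ▸ h.mem_verts_of_mem_edge hxy (Sym2.mem_mk_right x y))
    rcases Finset.mem_insert.1 hz with rfl | hz
    · exact ⟨x, hxw.symm, by simp [Sym2.eq_swap]⟩
    obtain ⟨b, hzb, hb⟩ := ih hz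
    by_cases hzbxy : s(z, b) = s(x, y)
    · rcases Sym2.eq_iff.1 hzbxy with ⟨rfl, -⟩ | ⟨rfl, -⟩
      exacts [⟨w, hxw, by simp⟩, ⟨w, hyw, by simp [Sym2.eq_swap]⟩]
    · exact ⟨b, hzb, by simp [Multiset.mem_erase_of_ne hzbxy, hb]⟩

theorem erase_edge {M : Multigraph} {u v : ℕ} (h : PathLike M u v) {e : Sym2 ℕ}
    (he : e ∈ M.edges) (heuv : ∀ z ∈ e, z = u ∨ z = v) (hne : M.edges.erase e ≠ 0) :
    PathLike ⟨M.verts, M.edges.erase e⟩ u v := by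
  induction h generalizing e with
  | base => simp_all
  | @dup M u v f hf h ih =>
    by_cases hfe : f = e
    · subst hfe
      simpa using h
    have he' : e ∈ M.edges := (Multiset.mem_cons.1 he).resolve_left (Ne.symm hfe)
    have hf' : f ∈ M.edges.erase e := (Multiset.mem_erase_of_ne hfe).2 hf
    dsimp only
    rw [Multiset.erase_cons_tail _ hfe]
    exact (ih he' heuv fun h0 => by simp [h0] at hf').dup f hf'
  | @subdiv M u v x y hxy w hw h ih =>
    have hwe : w ∉ e := fun hw' => by
      rcases heuv w hw' with rfl | rfl
      exacts [hw h.ends_mem.1, hw h.ends_mem.2]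
    have he' : e ∈ M.edges.erase s(x, y) := by
      simp only [Multiset.mem_cons] at he
      rcases he with rfl | rfl | he
      · exact absurd (Sym2.mem_mk_right x w) hwe
      · exact absurd (Sym2.mem_mk_left w y) hwe
      · exact he
    have hxy' : s(x, y) ∈ M.edges.erase e := by
      by_cases hxye : s(x, y) = e
      · rwa [hxye] at he' ⊢
      · exact (Multiset.mem_erase_of_ne hxye).2 hxy
    have hw' : s(x, w) ≠ e := fun h' => hwe (h' ▸ Sym2.mem_mk_right x w)
    have hw'' : s(w, y) ≠ e := fun h' => hwe (h' ▸ Sym2.mem_mk_left w y)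
    dsimp only
    rw [Multiset.erase_cons_tail _ hw', Multiset.erase_cons_tail _ hw'',
      Multiset.erase_comm]
    exact PathLike.subdiv (M := ⟨M.verts, M.edges.erase e⟩) x y hxy' w hw
      (ih (Multiset.mem_of_mem_erase he') heuv fun h0 => by simp [h0] at hxy')

end PathLike

open Multigraph

theorem Multigraph.NeighborClosed.of_subdivide {M : Multigraph} {u v x y w : ℕ} {T : Finset ℕ}
    (h : PathLike M u v) (hxy : s(x, y) ∈ M.edges) (hw : w ∉ M.verts)
    (hcl : (M.subdivide x y w).NeighborClosed u v T) : M.NeighborClosed u v T := by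
  intro a ha hau hav b hab
  by_cases habxy : s(a, b) = s(x, y)
  · have hne : ∀ z ∈ s(x, y), z ≠ w := fun z hz hzw =>
      hw (hzw ▸ h.mem_verts_of_mem_edge hxy hz)
    have hwT : w ∈ T := by
      rcases Sym2.eq_iff.1 habxy with ⟨rfl, -⟩ | ⟨rfl, -⟩
      exacts [hcl a ha hau hav w (subdivide_adj_left (hne a (Sym2.mem_mk_left a y))),
        hcl a ha hau hav w (subdivide_adj_right (hne a (Sym2.mem_mk_right x a)))]
    have hwu : w ≠ u := fun h' => hw (h' ▸ h.ends_mem.1)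
    have hwv : w ≠ v := fun h' => hw (h' ▸ h.ends_mem.2)
    rcases Sym2.eq_iff.1 habxy with ⟨-, rfl⟩ | ⟨-, rfl⟩
    exacts [hcl w hwT hwu hwv b (subdivide_adj_right (hne b (Sym2.mem_mk_right x b))).symm,
      hcl w hwT hwu hwv b (subdivide_adj_left (hne b (Sym2.mem_mk_left b y))).symm]
  · exact hcl a ha hau hav b (subdivide_adj_of_adj hab habxy)

theorem PathLike.induce {M : Multigraph} {u v : ℕ} (h : PathLike M u v) {T : Finset ℕ}
    (hu : u ∈ T) (hv : v ∈ T) (hcl : M.NeighborClosed u v T)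
    (hE : ∃ e ∈ M.edges, e ∈ T.sym2) : PathLike (M.induce T) u v := by
  induction h generalizing T with
  | base u v huv =>
    have hT : ({u, v} : Finset ℕ) ⊆ T := by simp [Finset.insert_subset_iff, hu, hv]
    simpa [induce_eq, Finset.inter_eq_left.2 hT, Multiset.filter_singleton, hu, hv]
      using PathLike.base u v huv
  | @dup M u v e he h ih =>
    obtain ⟨f, hf, hfT⟩ := hE
    have hE : ∃ f ∈ M.edges, f ∈ T.sym2 := by
      rcases Multiset.mem_cons.1 hf with rfl | hf
      exacts [⟨f, he, hfT⟩, ⟨f, hf, hfT⟩]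
    have ih := ih hu hv (fun a ha hau hav b hab =>
      hcl a ha hau hav b ⟨hab.1, Multiset.mem_cons_of_mem hab.2⟩) hE
    rw [induce_eq] at ih ⊢
    by_cases heT : e ∈ T.sym2
    · rw [Multiset.filter_cons_of_pos _ heT]
      exact ih.dup e (Multiset.mem_filter.2 ⟨he, heT⟩)
    · rwa [Multiset.filter_cons_of_neg _ heT]
  | @subdiv M u v x y hxy w hw h ih =>
    change PathLike ((M.subdivide x y w).induce T) u v
    have hxw : x ≠ w := fun h' => hw (h' ▸ h.mem_verts_of_mem_edge hxy (Sym2.mem_mk_left x y))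
    have hyw : y ≠ w := fun h' => hw (h' ▸ h.mem_verts_of_mem_edge hxy (Sym2.mem_mk_right x y))
    have hwu : w ≠ u := fun h' => hw (h' ▸ h.ends_mem.1)
    have hwv : w ≠ v := fun h' => hw (h' ▸ h.ends_mem.2)
    have hclM := hcl.of_subdivide h hxy hw
    by_cases hwT : w ∈ T
    · have hxT := hcl w hwT hwu hwv x (subdivide_adj_left hxw).symm
      have hyT := hcl w hwT hwu hwv y (subdivide_adj_right hyw).symm
      rw [induce_subdivide_of_mem M hxT hyT hwT]
      exact (ih hu hv hclM ⟨s(x, y), hxy, by simp [hxT, hyT]⟩).subdiv x y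
        (mem_induce_edges.2 ⟨hxy, by simp [hxT, hyT]⟩) w
        (fun h' => hw (Finset.mem_inter.1 h').1)
    · obtain ⟨f, hf, hfT⟩ := hE
      have hf : f ∈ M.edges.erase s(x, y) := by
        simp only [Multiset.mem_cons] at hf
        rcases hf with rfl | rfl | hf
        · simp [hwT] at hfT
        · simp [hwT] at hfT
        · exact hf
      have ih := ih hu hv hclM ⟨f, Multiset.mem_of_mem_erase hf, hfT⟩
      rw [induce_subdivide_of_notMem M hwT]
      by_cases hxyT : s(x, y) ∈ T.sym2
      · have hends : ∀ z ∈ s(x, y), z = u ∨ z = v := by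
          intro z hz
          by_contra! hzuv
          refine hwT (hcl z (Finset.mem_sym2_iff.1 hxyT z hz) hzuv.1 hzuv.2 w ?_)
          rcases Sym2.mem_iff.1 hz with rfl | rfl
          exacts [subdivide_adj_left hxw, subdivide_adj_right hyw]
        have hfE : f ∈ (M.induce T).edges.erase s(x, y) := by
          rw [induce_eq, ← Multiset.filter_erase]
          exact Multiset.mem_filter.2 ⟨hf, hfT⟩
        exact ih.erase_edge (mem_induce_edges.2 ⟨hxy, hxyT⟩) hends fun h0 => by simp [h0] at hfE
      · rwa [Multiset.erase_of_notMem fun h' => hxyT (mem_induce_edges.1 h').2]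

theorem pathLike_induce_component_general (M : Multigraph) (u v : ℕ)
    (hP : PathLike M u v)
    (S : Finset ℕ)
    (hS : (↑S : Set ℕ) ⊆ (↑M.verts : Set ℕ) \ {u, v})
    (hSne : S.Nonempty)
    (hSmax : ∀ a ∈ S, ∀ b : ℕ, b ∈ (↑M.verts : Set ℕ) \ {u, v} →
      M.toSimple.Adj a b → b ∈ S) :
    PathLike (M.induce (insert u (insert v S))) u v := by
  have hcl : M.NeighborClosed u v (insert u (insert v S)) := by
    intro a ha hau hav b hab
    have haS : a ∈ S := by simpa [hau, hav] using ha
    by_cases hbuv : b = u ∨ b = v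
    · rcases hbuv with rfl | rfl <;> simp
    · have hb : b ∈ (↑M.verts : Set ℕ) \ {u, v} := ⟨hP.mem_verts_of_adj hab, by simpa using hbuv⟩
      simp [hSmax a haS b hb hab]
  obtain ⟨a, ha⟩ := hSne
  have haV : a ∈ M.verts := (hS ha).1
  have hauv : a ≠ u ∧ a ≠ v := by simpa [not_or] using (hS ha).2
  obtain ⟨b, hab⟩ := hP.exists_adj haV
  have haT : a ∈ insert u (insert v S) := by simp [ha]
  exact hP.induce (by simp) (by simp) hcl
    ⟨s(a, b), hab.2, Finset.mk_mem_sym2_iff.2 ⟨haT, hcl a haT hauv.1 hauv.2 b hab⟩⟩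

/-- If `G` is a 2-connected path-like series-parallel graph with pair of ends `u`, `v`
and `S` is a connected component of `G − {u, v}`, then the subgraph induced by
`{u, v} ∪ S` is again path-like with pair of ends `u`, `v`. -/
theorem pathLike_induce_component (M : Multigraph) (u v : ℕ)
    (hP : PathLike M u v) (h2conn : TwoConnected M.game)
    (S : Finset ℕ)
    (hS : (↑S : Set ℕ) ⊆ (↑M.verts : Set ℕ) \ {u, v})
    (hSne : S.Nonempty)
    (hSconn : (M.toSimple.induce (↑S : Set ℕ)).Connected)
    (hSmax : ∀ a ∈ S, ∀ b : ℕ, b ∈ (↑M.verts : Set ℕ) \ {u, v} →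
      M.toSimple.Adj a b → b ∈ S) :
    PathLike (M.induce (insert u (insert v S))) u v :=
  pathLike_induce_component_general M u v hP S hS hSne hSmax
end

section
/- Every finite tree with at least two vertices is {x}-exit 1-copwin for every vertex x: a single cop starting at x, in the cops and robber game with exit set {x}, can catch the robber while never allowing the robber to stand alone on x after a cop move. -/
open SimpleGraph

variable {V : Type*}



/-! The cop always steps towards the robber along the unique path between them. By induction,
as long as the robber has not been caught, the cop lies on the path from the exit `x` to the
robber and has moved one step farther from `x` in every round: a robber stepping towards `x`
walks along that path, whose part up to the cop stays the same, while a robber stepping away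
only lengthens it. Distances in a finite tree are smaller than the number of vertices, so the
robber is caught; and while the cop is on the path from `x` to the robber, the robber can stand
on `x` only on the cop's vertex, so he never escapes. -/

lemma Step.dist_le_one {G : SimpleGraph V} {a b : V} (h : Step G a b) : G.dist a b ≤ 1 := by
  obtain rfl | hadj := h
  · simp
  · exact (dist_eq_one_iff_adj.mpr hadj).le

namespace SimpleGraph

variable {G : SimpleGraph V} {u v w x c r r' : V}

lemma Connected.dist_lt_card [Fintype V] (hG : G.Connected) (u v : V) :
    G.dist u v < Fintype.card V := by
  obtain ⟨p, hp, hlen⟩ := hG.exists_path_of_dist u v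
  exact hlen ▸ hp.length_lt

lemma Walk.dist_add_dist_of_mem_support {p : G.Walk u v} (hp : p.length = G.dist u v)
    (hw : w ∈ p.support) : G.dist u w + G.dist w v = G.dist u v := by
  classical
  have hsplit := congrArg Walk.length (p.take_spec hw)
  rw [Walk.length_append] at hsplit
  have htake := dist_le (p.takeUntil w hw)
  have hdrop := dist_le (p.dropUntil w hw)
  have htri := (p.dropUntil w hw).reachable.dist_triangle_right u
  omega

/-- The geodesic from `x` to `r` is the one to `r'` followed by the edge `r'r`, and `c` lies on
it before `r`. -/
lemma IsTree.dist_add_dist_of_adj_of_dist_add_one_eq (hT : G.IsTree)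
    (hbet : G.dist x c + G.dist c r = G.dist x r) (hcr : c ≠ r) (hadj : G.Adj r' r)
    (hcloser : G.dist x r' + 1 = G.dist x r) :
    G.dist x c + G.dist c r' = G.dist x r' := by
  obtain ⟨p, -, hp⟩ := hT.connected.exists_path_of_dist x r'
  obtain ⟨q₁, -, hq₁⟩ := hT.connected.exists_path_of_dist x c
  obtain ⟨q₂, -, hq₂⟩ := hT.connected.exists_path_of_dist c r
  have hconcat : (p.concat hadj).length = G.dist x r := by
    rw [Walk.length_concat, hp, hcloser]
  have happend : (q₁.append q₂).length = G.dist x r := by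
    rw [Walk.length_append, hq₁, hq₂, hbet]
  have heq : q₁.append q₂ = p.concat hadj :=
    (hT.existsUnique_path x r).unique (Walk.isPath_of_length_eq_dist _ happend)
      (Walk.isPath_of_length_eq_dist _ hconcat)
  have hc : c ∈ (p.concat hadj).support :=
    heq ▸ Walk.mem_support_append_iff _ _ |>.mpr (Or.inr q₂.start_mem_support)
  rw [Walk.support_concat, List.mem_append, List.mem_singleton] at hc
  exact Walk.dist_add_dist_of_mem_support hp (hc.resolve_right hcr)

lemma IsTree.dist_add_dist_of_step (hT : G.IsTree)
    (hbet : G.dist x c + G.dist c r = G.dist x r) (hcr : c ≠ r) (hstep : Step G r r') :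
    G.dist x c + G.dist c r' = G.dist x r' := by
  obtain rfl | hadj := hstep
  · exact hbet
  obtain hfarther | hcloser := hT.dist_eq_dist_add_one_of_adj x hadj
  · exact hT.dist_add_dist_of_adj_of_dist_add_one_eq hbet hcr hadj.symm hfarther.symm
  · have h₁ := hT.connected.dist_triangle (u := x) (v := c) (w := r')
    have h₂ := hT.connected.dist_triangle (u := c) (v := r) (w := r')
    rw [dist_eq_one_iff_adj.mpr hadj] at h₂
    omega

open Classical in
noncomputable def stepToward (G : SimpleGraph V) (c r : V) : V :=
  if h : G.Reachable c r then h.exists_walk_length_eq_dist.choose.snd else c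

lemma step_stepToward (G : SimpleGraph V) (c r : V) : Step G c (G.stepToward c r) := by
  unfold stepToward
  split_ifs with h
  · generalize h.exists_walk_length_eq_dist.choose = p
    cases p with
    | nil => exact .inl rfl
    | cons _ _ => exact .inr (Walk.adj_snd Walk.not_nil_cons)
  · exact .inl rfl

@[simp]
lemma stepToward_self (G : SimpleGraph V) (c : V) : G.stepToward c c = c := by
  rw [stepToward, dif_pos .rfl]
  refine Walk.getVert_of_length_le _ ?_
  rw [Reachable.rfl.exists_walk_length_eq_dist.choose_spec, dist_self]
  exact Nat.zero_le 1

lemma dist_stepToward_lt (h : G.Reachable c r) (hcr : c ≠ r) :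
    G.dist (G.stepToward c r) r < G.dist c r := by
  rw [stepToward, dif_pos h]
  set p := h.exists_walk_length_eq_dist.choose
  have hp : p.length = G.dist c r := h.exists_walk_length_eq_dist.choose_spec
  have hnil : ¬ p.Nil := fun hnil => hcr hnil.eq
  have htail := Walk.length_tail_add_one hnil
  have hdist := dist_le p.tail
  omega

lemma Connected.dist_add_dist_stepToward (hG : G.Connected)
    (hbet : G.dist x c + G.dist c r = G.dist x r) (hcr : c ≠ r) :
    G.dist x (G.stepToward c r) + G.dist (G.stepToward c r) r = G.dist x r ∧
      G.dist x (G.stepToward c r) = G.dist x c + 1 := by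
  have hcloser := dist_stepToward_lt (hG c r) hcr
  have hstep := (G.step_stepToward c r).dist_le_one
  have h₁ := hG.dist_triangle (u := x) (v := c) (w := G.stepToward c r)
  have h₂ := hG.dist_triangle (u := x) (v := G.stepToward c r) (w := r)
  omega

end SimpleGraph

noncomputable def chaseStrategy (G : SimpleGraph V) (c₀ : Fin 1 → V) : CopStrategy G 1 where
  init := c₀
  move c r _ := G.stepToward (c 0) r
  valid c r i := by rw [Subsingleton.elim i 0]; exact G.step_stepToward (c 0) r

section chaseStrategy

variable {G : SimpleGraph V} {c₀ : Fin 1 → V} {τ : RobberStrategy G 1} {x : V} {n : ℕ}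

lemma chaseStrategy_play_succ_cop (n : ℕ) :
    (play (chaseStrategy G c₀) τ (n + 1)).1 0 =
      G.stepToward ((play (chaseStrategy G c₀) τ n).1 0) (play (chaseStrategy G c₀) τ n).2 :=
  rfl

lemma caught_chaseStrategy_iff :
    Caught (chaseStrategy G c₀) τ n ↔
      (play (chaseStrategy G c₀) τ (n + 1)).1 0 = (play (chaseStrategy G c₀) τ n).2 := by
  refine ⟨fun ⟨i, h⟩ => ?_, fun h => ⟨0, .inr h⟩⟩
  rw [Subsingleton.elim i 0] at h
  rcases h with h | h
  · rw [chaseStrategy_play_succ_cop, h, SimpleGraph.stepToward_self]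
  · exact h

lemma not_escaped_chaseStrategy (hG : G.Connected)
    (hbet : G.dist x ((play (chaseStrategy G c₀) τ n).1 0) +
      G.dist ((play (chaseStrategy G c₀) τ n).1 0) (play (chaseStrategy G c₀) τ n).2 =
      G.dist x (play (chaseStrategy G c₀) τ n).2) :
    ¬ Escaped {x} (chaseStrategy G c₀) τ n := by
  rintro ⟨hrob, hfree⟩
  rw [Set.mem_singleton_iff] at hrob
  rw [hrob, SimpleGraph.dist_self] at hbet
  have hcop : x = (play (chaseStrategy G c₀) τ n).1 0 := hG.dist_eq_zero_iff.mp (by omega)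
  exact hfree 0 (by rw [chaseStrategy_play_succ_cop, hrob, ← hcop, SimpleGraph.stepToward_self])

lemma SimpleGraph.IsTree.chaseStrategy_invariant (hT : G.IsTree) (hx : c₀ 0 = x) (n : ℕ)
    (hn : ∀ m < n, ¬ Caught (chaseStrategy G c₀) τ m) :
    G.dist x ((play (chaseStrategy G c₀) τ n).1 0) +
        G.dist ((play (chaseStrategy G c₀) τ n).1 0) (play (chaseStrategy G c₀) τ n).2 =
      G.dist x (play (chaseStrategy G c₀) τ n).2 ∧
    n ≤ G.dist x ((play (chaseStrategy G c₀) τ n).1 0) := by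
  induction n with
  | zero =>
    have hcop : (play (chaseStrategy G c₀) τ 0).1 0 = x := hx
    simp [hcop]
  | succ n ih =>
    obtain ⟨hbet, hfar⟩ := ih fun m hm => hn m (by omega)
    have hfree := hn n n.lt_succ_self
    rw [caught_chaseStrategy_iff, chaseStrategy_play_succ_cop] at hfree
    have hcr : (play (chaseStrategy G c₀) τ n).1 0 ≠ (play (chaseStrategy G c₀) τ n).2 :=
      fun h => hfree (by rw [h, SimpleGraph.stepToward_self])
    obtain ⟨hbet', hstep⟩ := hT.connected.dist_add_dist_stepToward hbet hcr
    exact ⟨hT.dist_add_dist_of_step hbet' hfree (τ.valid _ _), by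
      rw [chaseStrategy_play_succ_cop, hstep]; omega⟩

end chaseStrategy

theorem tree_exit_one_copwin_general [Fintype V] (G : SimpleGraph V) (hT : G.IsTree)
    (x : V) :
    ExitCopWin G 1 {x} := by
  intro c₀ hc₀
  obtain ⟨i, hi⟩ := hc₀ rfl
  have hx : c₀ 0 = x := Subsingleton.elim i 0 ▸ hi
  refine ⟨chaseStrategy G c₀, rfl, fun τ => ?_⟩
  have hcaught : ∃ n, Caught (chaseStrategy G c₀) τ n := by
    by_contra! hnever
    have hfar := (hT.chaseStrategy_invariant hx (Fintype.card V) fun m _ => hnever m).2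
    have hbound := hT.connected.dist_lt_card x ((play (chaseStrategy G c₀) τ (Fintype.card V)).1 0)
    omega
  classical
  refine ⟨Nat.find hcaught, Nat.find_spec hcaught, fun m hm => not_escaped_chaseStrategy
    hT.connected (hT.chaseStrategy_invariant hx m fun k hk => Nat.find_min hcaught (by omega)).1⟩

/-- Every finite tree with at least two vertices is `{x}`-exit 1-copwin for every
vertex `x`. -/
theorem tree_exit_one_copwin [Fintype V] (G : SimpleGraph V) (hT : G.IsTree)
    (h2 : 2 ≤ Fintype.card V) (x : V) :
    ExitCopWin G 1 {x} :=
  tree_exit_one_copwin_general G hT x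
end
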